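/- Let W be a connected Hausdorff topological space, Q a group acting faithfully on W by homeomorphisms, and Q' a normal subgroup of Q whose action on W is free and such that every point w ∈ W has an open neighborhood U with γ·U ∩ U = ∅ for all γ ∈ Q', γ ≠ 1 (a covering-space action). Then the induced action of the quotient group Q/Q' on the orbit space W/Q' is faithful: if q ∈ Q satisfies q·w ∈ Q'·w for every w ∈ W, then q ∈ Q'. -/
import Mathlib


open scoped Pointwise

/-- Let `W` be a connected Hausdorff space, `Q` a group acting faithfully
on `W` by homeomorphisms, and `Q'` a normal subgroup of `Q` whose action on `W` is a free
covering-space action. Then the induced action of `Q/Q'` on `W/Q'` is faithful: if `q ∈ Q`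
satisfies `q·w ∈ Q'·w` for every `w ∈ W`, then `q ∈ Q'`. -/
theorem quotient_action_faithful
    {W : Type*} [TopologicalSpace W] [ConnectedSpace W] [T2Space W]
    {Q : Type*} [Group Q] [MulAction Q W]
    (hcont : ∀ q : Q, Continuous fun w : W => q • w)
    (hfaith : ∀ q : Q, (∀ w : W, q • w = w) → q = 1)
    (Q' : Subgroup Q) (hnormal : Q'.Normal)
    (hfree : ∀ γ ∈ Q', ∀ w : W, γ • w = w → γ = 1)
    (hcov : ∀ w : W, ∃ U : Set W, IsOpen U ∧ w ∈ U ∧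
      ∀ γ ∈ Q', γ ≠ 1 → Disjoint (γ • U) U)
    (q : Q) (hq : ∀ w : W, ∃ γ ∈ Q', q • w = γ • w) :
    q ∈ Q' := by
  obtain ⟨w₀⟩ : Nonempty W := inferInstance
  obtain ⟨γ₀, hγ₀, hw₀⟩ := hq w₀
  set S : Set W := {w | q • w = γ₀ • w} with hS
  have hclosed : IsClosed S := isClosed_eq (hcont q) (hcont γ₀)
  have hopen : IsOpen S := by
    rw [isOpen_iff_forall_mem_open]
    intro w hw
    obtain ⟨U, hU, hwU, hdis⟩ := hcov w
    refine ⟨U ∩ (fun w' => (γ₀⁻¹ * q) • w') ⁻¹' U, ?_, ?_, ?_⟩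
    · rintro w' ⟨hw'U, hw'V⟩
      obtain ⟨γ', hγ', hqw'⟩ := hq w'
      have hmem : (γ₀⁻¹ * γ') • w' ∈ U := by
        have h1 : (γ₀⁻¹ * q) • w' = (γ₀⁻¹ * γ') • w' := by
          simp [mul_smul, hqw']
        rw [← h1]; exact hw'V
      have hδ : γ₀⁻¹ * γ' = 1 := by
        by_contra h
        exact Set.disjoint_left.mp
          (hdis (γ₀⁻¹ * γ') (mul_mem (inv_mem hγ₀) hγ') h)
          (Set.smul_mem_smul_set hw'U) hmem
      have : γ₀ = γ' := by
        rwa [inv_mul_eq_one] at hδ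
      show q • w' = γ₀ • w'
      rw [hqw', this]
    · exact hU.inter ((hcont _).isOpen_preimage U hU)
    · refine ⟨hwU, ?_⟩
      show (γ₀⁻¹ * q) • w ∈ U
      have : (γ₀⁻¹ * q) • w = w := by
        rw [mul_smul, hw, inv_smul_smul]
      rwa [this]
  have hSuniv : S = Set.univ := IsClopen.eq_univ ⟨hclosed, hopen⟩ ⟨w₀, hw₀⟩
  have hid : ∀ w : W, (γ₀⁻¹ * q) • w = w := by
    intro w
    have hw : q • w = γ₀ • w := by
      have : w ∈ S := hSuniv ▸ Set.mem_univ w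
      exact this
    rw [mul_smul, hw, inv_smul_smul]
  have : γ₀⁻¹ * q = 1 := hfaith _ hid
  have hqγ : q = γ₀ := by rw [inv_mul_eq_one] at this; exact this.symm
  rw [hqγ]; exact hγ₀
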